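/- arXiv:1906.12235 — 2 statements merged into one kernel-verified Lean document; each statement's English description precedes it below -/
import Mathlib

section
/- Let n, k ∈ ℕ with k ≥ 2. If there exists an (n−k)-regular bipartite false twin-free graph G on 2n vertices with γ_t(G) = 6 and γ_gr^t(G) = 6, then there exists an orthogonal array OA(k, k − 1). -/
/-- `S` is a total dominating set of `G`: every vertex has a neighbor in `S`. -/
def IsTotalDomSet {V : Type*} (G : SimpleGraph V) (S : Set V) : Prop :=
  ∀ v : V, ∃ u ∈ S, G.Adj v u

/-- `l` is a legal sequence of `G`: the vertices are distinct and every vertex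
(except possibly the first) totally dominates a vertex not totally dominated
by the previous vertices. -/
def IsLegalSeq {V : Type*} (G : SimpleGraph V) (l : List V) : Prop :=
  l.Nodup ∧ ∀ i : Fin l.length, 0 < (i : ℕ) →
    ∃ w : V, G.Adj (l.get i) w ∧ ∀ j : Fin l.length, (j : ℕ) < (i : ℕ) → ¬ G.Adj (l.get j) w

/-- `l` is a total dominating sequence of `G`. -/
def IsTotalDomSeq {V : Type*} (G : SimpleGraph V) (l : List V) : Prop :=
  IsLegalSeq G l ∧ IsTotalDomSet G {v | v ∈ l}

/-- The Grundy total domination number of `G`: the maximum length of a total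
dominating sequence. -/
noncomputable def grundyTotalDomNum {V : Type*} (G : SimpleGraph V) : ℕ :=
  sSup {k : ℕ | ∃ l : List V, IsTotalDomSeq G l ∧ l.length = k}

/-- The total domination number of `G`: the minimum cardinality of a total
dominating set. -/
noncomputable def totalDomNum {V : Type*} (G : SimpleGraph V) : ℕ :=
  sInf {k : ℕ | ∃ S : Set V, IsTotalDomSet G S ∧ S.ncard = k}

/-- `A`, `B` is a bipartition of `G`. -/
def IsBipartitionOf {V : Type*} (G : SimpleGraph V) (A B : Set V) : Prop :=
  (∀ v : V, (v ∈ A ∧ v ∉ B) ∨ (v ∈ B ∧ v ∉ A)) ∧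
  ∀ ⦃u v : V⦄, G.Adj u v → (u ∈ A ∧ v ∈ B) ∨ (u ∈ B ∧ v ∈ A)

/-- `G` has no false twins: distinct vertices have distinct open neighborhoods. -/
def FalseTwinFree {V : Type*} (G : SimpleGraph V) : Prop :=
  ∀ u v : V, u ≠ v → G.neighborSet u ≠ G.neighborSet v

/-- `G` has no isolated vertices. -/
def NoIsolatedVerts {V : Type*} (G : SimpleGraph V) : Prop :=
  ∀ v : V, ∃ u : V, G.Adj v u

/-- An orthogonal array `OA(s, q)`: a `q² × s` array with entries from `Fin q`
such that within any two distinct columns, every ordered pair of symbols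
occurs in exactly one row. -/
def IsOrthogonalArray {s q : ℕ} (A : Fin (q ^ 2) → Fin s → Fin q) : Prop :=
  ∀ j₁ j₂ : Fin s, j₁ ≠ j₂ → ∀ x y : Fin q, ∃! r : Fin (q ^ 2), A r j₁ = x ∧ A r j₂ = y

/-!
Let `A`, `B` be the sides of `G`; every vertex misses exactly `k` vertices of the other side.
Each side carries a legal sequence of length 3, and a legal sequence inside `A` followed by one
inside `B` extends to a total dominating sequence, so `γ_gr^t(G) = 6` bounds legal sequences
inside a side by 3. Then `γ_t(G) = 6` forces any two vertices of a side to have a common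
non-neighbour, and the length bound together with twin-freeness makes it unique. Hence
non-adjacency is the incidence of a projective plane of order `k - 1`, with `k² - k + 1` lines.
For a point `p₀`, the lines missing `p₀` and the lines through `p₀` index the rows and columns
of an `OA(k, k - 1)` whose entries are the points where they meet.
-/

theorem exists_isOrthogonalArray_of_existsUnique {R C : Type*} {S : C → Type*} {s q : ℕ}
    [Finite R] [Finite C] [∀ c, Finite (S c)]
    (hR : Nat.card R = q ^ 2) (hC : Nat.card C = s) (hS : ∀ c, Nat.card (S c) = q)
    (f : R → (c : C) → S c)
    (hf : ∀ c₁ c₂, c₁ ≠ c₂ → ∀ x y, ∃! r, f r c₁ = x ∧ f r c₂ = y) :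
    ∃ A : Fin (q ^ 2) → Fin s → Fin q, IsOrthogonalArray A := by
  let eR := (Finite.equivFinOfCardEq hR).symm
  let eC := (Finite.equivFinOfCardEq hC).symm
  let eS c := Finite.equivFinOfCardEq (hS c)
  refine ⟨fun r j => eS (eC j) (f (eR r) (eC j)), fun j₁ j₂ hj x y => ?_⟩
  refine (Equiv.existsUnique_congr eR fun r => ?_).mpr
    (hf (eC j₁) (eC j₂) (eC.injective.ne hj) ((eS _).symm x) ((eS _).symm y))
  simp only [← Equiv.eq_symm_apply]

/-- A projective plane of order `k - 1`, `I p l` meaning that `p` lies on `l`; for `k = 2` it may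
be a triangle. -/
structure IsProjectivePlane {P L : Type*} (I : P → L → Prop) (k : ℕ) : Prop where
  existsUnique_line : ∀ p q : P, p ≠ q → ∃! l, I p l ∧ I q l
  existsUnique_point : ∀ l m : L, l ≠ m → ∃! p, I p l ∧ I p m
  ncard_points : ∀ l, {p | I p l}.ncard = k
  ncard_lines : ∀ p, {l | I p l}.ncard = k

namespace IsProjectivePlane

variable {P L : Type*} {I : P → L → Prop} {k : ℕ}

theorem eq_of_incident (h : IsProjectivePlane I k) {p q : P} {l m : L} (hpq : p ≠ q)
    (hpl : I p l) (hql : I q l) (hpm : I p m) (hqm : I q m) : l = m :=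
  (h.existsUnique_line p q hpq).unique ⟨hpl, hql⟩ ⟨hpm, hqm⟩

noncomputable def meet (h : IsProjectivePlane I k) {l m : L} (hlm : l ≠ m) : P :=
  (h.existsUnique_point l m hlm).exists.choose

theorem meet_spec (h : IsProjectivePlane I k) {l m : L} (hlm : l ≠ m) :
    I (h.meet hlm) l ∧ I (h.meet hlm) m :=
  (h.existsUnique_point l m hlm).exists.choose_spec

theorem eq_meet (h : IsProjectivePlane I k) {l m : L} (hlm : l ≠ m) {p : P}
    (hpl : I p l) (hpm : I p m) : p = h.meet hlm :=
  (h.existsUnique_point l m hlm).unique ⟨hpl, hpm⟩ (h.meet_spec hlm)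

theorem meet_eq_iff (h : IsProjectivePlane I k) {l m : L} (hlm : l ≠ m) {p : P} (hpm : I p m) :
    h.meet hlm = p ↔ I p l :=
  ⟨fun e => e ▸ (h.meet_spec hlm).1, fun hpl => (h.eq_meet hlm hpl hpm).symm⟩

theorem card_lines [Finite P] [Finite L] (h : IsProjectivePlane I k) (l₀ : L) :
    Nat.card L = k * (k - 1) + 1 := by
  classical
  have := Fintype.ofFinite P
  have := Fintype.ofFinite L
  have hcount := Finset.card_mul_eq_card_mul I (s := {p | I p l₀}) (t := Finset.univ.erase l₀)
    (m := k - 1) (n := 1) (fun p hp => ?_) (fun l hl => ?_)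
  · rw [Finset.card_erase_of_mem (Finset.mem_univ _), Finset.card_univ, mul_one,
      ← Nat.card_eq_fintype_card, ← Set.ncard_coe_finset, Finset.coe_filter] at hcount
    simp only [Finset.mem_univ, true_and, h.ncard_points] at hcount
    have : 0 < Nat.card L := Nat.card_pos_iff.2 ⟨⟨l₀⟩, inferInstance⟩
    omega
  · rw [Finset.bipartiteAbove, Finset.filter_erase, Finset.card_erase_of_mem, ← h.ncard_lines p,
      ← Set.ncard_coe_finset, Finset.coe_filter]
    · simp only [Finset.mem_univ, true_and]
    · simpa using hp
  · have hl : l₀ ≠ l := (Finset.ne_of_mem_erase hl).symm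
    refine Finset.card_eq_one.2 ⟨h.meet hl, Finset.ext fun p => ?_⟩
    simp only [Finset.mem_bipartiteBelow, Finset.mem_filter, Finset.mem_univ, true_and,
      Finset.mem_singleton]
    exact ⟨fun hp => h.eq_meet hl hp.1 hp.2, fun hp => hp ▸ h.meet_spec hl⟩

theorem exists_isOrthogonalArray [Finite P] [Finite L] (h : IsProjectivePlane I k) (hk : 1 ≤ k)
    (p₀ : P) : ∃ A : Fin ((k - 1) ^ 2) → Fin k → Fin (k - 1), IsOrthogonalArray A := by
  obtain ⟨l₀, -⟩ : {l | I p₀ l}.Nonempty :=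
    Set.nonempty_of_ncard_ne_zero (by rw [h.ncard_lines]; omega)
  have hrows : Nat.card {l | ¬ I p₀ l} = (k - 1) ^ 2 := by
    have := Set.ncard_add_ncard_compl {l | I p₀ l}
    rw [h.ncard_lines, h.card_lines l₀, Set.compl_ofPred] at this
    rw [Nat.card_coe_set_eq]
    obtain ⟨j, rfl⟩ := Nat.exists_eq_add_of_le' hk
    simp only [Nat.add_sub_cancel] at this ⊢
    nlinarith
  have hne (r : {l | ¬ I p₀ l}) (c : {l | I p₀ l}) : (r : L) ≠ c := fun e => r.2 (e ▸ c.2)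
  refine exists_isOrthogonalArray_of_existsUnique (C := {l | I p₀ l})
    (S := fun c => ↥({p | I p c} \ {p₀})) hrows
    (by rw [Nat.card_coe_set_eq, h.ncard_lines])
    (fun c => by
      rw [Nat.card_coe_set_eq, Set.ncard_sdiff_singleton_of_mem (show p₀ ∈ {p | I p c} from c.2),
        h.ncard_points])
    (fun r c => ⟨h.meet (hne r c), Set.mem_sdiff_singleton.2 ⟨(h.meet_spec _).2,
      fun e => r.2 (by simpa only [e] using (h.meet_spec (hne r c)).1)⟩⟩) ?_
  rintro c₁ c₂ hc ⟨x, hx, hx₀⟩ ⟨y, hy, hy₀⟩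
  replace hc : (c₁ : L) ≠ c₂ := Subtype.coe_ne_coe.2 hc
  replace hx₀ : x ≠ p₀ := hx₀
  replace hy₀ : y ≠ p₀ := hy₀
  have hxy : x ≠ y := fun e => hc (h.eq_of_incident hx₀ hx c₁.2 (e ▸ hy) c₂.2)
  obtain ⟨l, ⟨hxl, hyl⟩, hl⟩ := h.existsUnique_line x y hxy
  have hp₀l : ¬ I p₀ l := fun hp₀l => hc <|
    (h.eq_of_incident hx₀ hx c₁.2 hxl hp₀l).trans (h.eq_of_incident hy₀ hy c₂.2 hyl hp₀l).symm
  refine (existsUnique_congr fun r => ?_).2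
    ⟨⟨l, hp₀l⟩, ⟨hxl, hyl⟩, fun r hr => Subtype.ext (hl r hr)⟩
  simp only [Subtype.ext_iff]
  exact and_congr (h.meet_eq_iff _ hx) (h.meet_eq_iff _ hy)

end IsProjectivePlane

section LegalSeq

variable {V : Type*} {G : SimpleGraph V}

theorem isLegalSeq_iff {l : List V} :
    IsLegalSeq G l ↔ l.Nodup ∧ ∀ i (hi : i < l.length), 0 < i →
      ∃ w, G.Adj l[i] w ∧ ∀ j (hj : j < l.length), j < i → ¬ G.Adj l[j] w :=
  and_congr_right fun _ =>
    ⟨fun h i hi hi₀ => h ⟨i, hi⟩ hi₀ |>.imp fun _ hw => ⟨hw.1, fun j hj => hw.2 ⟨j, hj⟩⟩,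
      fun h i hi₀ => h i i.isLt hi₀ |>.imp fun _ hw => ⟨hw.1, fun j => hw.2 j j.isLt⟩⟩

theorem isLegalSeq_nil : IsLegalSeq G [] :=
  ⟨List.nodup_nil, fun i => absurd i.isLt (by simp)⟩

theorem isLegalSeq_singleton (u : V) : IsLegalSeq G [u] :=
  ⟨List.nodup_singleton u, fun i hi => absurd i.isLt (by simp at hi ⊢)⟩

theorem IsLegalSeq.concat {l : List V} {u w : V} (hl : IsLegalSeq G l) (hadj : G.Adj u w)
    (hnew : ∀ x ∈ l, ¬ G.Adj x w) : IsLegalSeq G (l ++ [u]) := by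
  rw [isLegalSeq_iff] at hl ⊢
  refine ⟨hl.1.append (List.nodup_singleton u) ?_, fun i hi hi₀ => ?_⟩
  · exact List.disjoint_singleton.2 fun hu => hnew u hu hadj
  obtain hil | rfl : i < l.length ∨ i = l.length := by
    simp only [List.length_append, List.length_singleton] at hi
    omega
  · obtain ⟨w', hw', hprev⟩ := hl.2 i hil hi₀
    refine ⟨w', by rwa [List.getElem_append_left hil], fun j hj hji => ?_⟩
    rw [List.getElem_append_left (hji.trans hil)]
    exact hprev j _ hji
  · refine ⟨w, by simpa using hadj, fun j hj hji => ?_⟩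
    rw [List.getElem_append_left hji]
    exact hnew _ (List.getElem_mem _)

theorem IsLegalSeq.append {la lb : List V} (hla : IsLegalSeq G la) (hlb : IsLegalSeq G lb)
    (hsep : ∀ x ∈ la, ∀ y ∈ lb, ∀ w, G.Adj y w → ¬ G.Adj x w)
    (hlb₀ : ∀ y ∈ lb, ∃ w, G.Adj y w) : IsLegalSeq G (la ++ lb) := by
  rw [isLegalSeq_iff] at hla hlb ⊢
  refine ⟨hla.1.append hlb.1 fun x hxa hxb => ?_, fun i hi hi₀ => ?_⟩
  · obtain ⟨w, hw⟩ := hlb₀ x hxb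
    exact hsep x hxa x hxb w hw hw
  obtain hil | hil := lt_or_ge i la.length
  · obtain ⟨w, hw, hprev⟩ := hla.2 i hil hi₀
    refine ⟨w, by rwa [List.getElem_append_left hil], fun j hj hji => ?_⟩
    rw [List.getElem_append_left (hji.trans hil)]
    exact hprev j _ hji
  have hi' : i - la.length < lb.length := by
    simp only [List.length_append] at hi
    omega
  have hy : lb[i - la.length] ∈ lb := List.getElem_mem hi'
  obtain ⟨w, hw, hprev⟩ : ∃ w, G.Adj lb[i - la.length] w ∧
      ∀ j (hj : j < lb.length), j < i - la.length → ¬ G.Adj lb[j] w := by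
    rcases Nat.eq_zero_or_pos (i - la.length) with h₀ | h₀
    · exact (hlb₀ _ hy).imp fun w hw => ⟨hw, fun j _ hj => absurd hj (by omega)⟩
    · exact hlb.2 _ hi' h₀
  refine ⟨w, by rwa [List.getElem_append_right hil], fun j hj hji => ?_⟩
  obtain hjl | hjl := lt_or_ge j la.length
  · rw [List.getElem_append_left hjl]
    exact hsep _ (List.getElem_mem hjl) _ hy w hw
  · rw [List.getElem_append_right hjl]
    exact hprev _ _ (by omega)

theorem IsLegalSeq.exists_extension [Fintype V] {l₀ : List V} (h₀ : IsLegalSeq G l₀)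
    {P T : Set V} (hl₀ : ∀ x ∈ l₀, x ∈ P) (hT : ∀ v ∈ T, ∃ u ∈ P, G.Adj v u) :
    ∃ l, IsLegalSeq G l ∧ (∀ x ∈ l, x ∈ P) ∧ (∀ v ∈ T, ∃ u ∈ l, G.Adj v u) ∧
      l₀.length ≤ l.length := by
  by_cases hdom : ∀ v ∈ T, ∃ u ∈ l₀, G.Adj v u
  · exact ⟨l₀, h₀, hl₀, hdom, le_rfl⟩
  push Not at hdom
  obtain ⟨v, hv, hvl₀⟩ := hdom
  obtain ⟨u, hu, huv⟩ := hT v hv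
  have h₁ : IsLegalSeq G (l₀ ++ [u]) := h₀.concat huv.symm fun x hx hxv => hvl₀ x hx hxv.symm
  have : Fintype.card V - (l₀ ++ [u]).length < Fintype.card V - l₀.length := by
    have := h₁.1.length_le_card
    simp only [List.length_append, List.length_singleton] at this ⊢
    omega
  obtain ⟨l, hl, hlP, hlT, hlen⟩ :=
    h₁.exists_extension (by simpa [or_imp, forall_and] using ⟨hl₀, hu⟩) hT
  exact ⟨l, hl, hlP, hlT, by simp only [List.length_append, List.length_singleton] at hlen; omega⟩
termination_by Fintype.card V - l₀.length

end LegalSeq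

section Domination

variable {V : Type*} {G : SimpleGraph V}

theorem totalDomNum_le_ncard {S : Set V} (hS : IsTotalDomSet G S) : totalDomNum G ≤ S.ncard :=
  Nat.sInf_le ⟨S, hS, rfl⟩

theorem exists_isTotalDomSet_ncard_eq (h : totalDomNum G ≠ 0) :
    ∃ S, IsTotalDomSet G S ∧ S.ncard = totalDomNum G :=
  Nat.sInf_mem <| Set.nonempty_iff_ne_empty.2 fun he => h (Nat.sInf_eq_zero.2 (Or.inr he))

theorem IsTotalDomSet.noIsolatedVerts {S : Set V} (hS : IsTotalDomSet G S) : NoIsolatedVerts G :=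
  fun v => (hS v).imp fun _ hu => hu.2

theorem IsTotalDomSeq.length_le_grundyTotalDomNum [Fintype V] {l : List V}
    (hl : IsTotalDomSeq G l) : l.length ≤ grundyTotalDomNum G :=
  le_csSup ⟨Fintype.card V, by rintro _ ⟨l', hl', rfl⟩; exact hl'.1.1.length_le_card⟩ ⟨l, hl, rfl⟩

end Domination

section Bipartite

variable {V : Type*} {G : SimpleGraph V} {A B : Set V}

theorem IsBipartitionOf.isBipartiteWith (h : IsBipartitionOf G A B) : G.IsBipartiteWith A B where
  disjoint := Set.disjoint_left.2 fun v hvA hvB => by rcases h.1 v with h | h <;> tauto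
  mem_of_adj := h.2

theorem IsBipartitionOf.ncard_add_ncard [Finite V] (h : IsBipartitionOf G A B) :
    A.ncard + B.ncard = Nat.card V := by
  rw [← Set.ncard_union_eq h.isBipartiteWith.disjoint, ← Set.ncard_univ]
  congr 1
  exact Set.eq_univ_of_forall fun v => by rcases h.1 v with h | h <;> simp [h.1]

theorem ncard_setOf_not_adj (x : V) :
    {y : A | ¬ G.Adj x y}.ncard = (A \ G.neighborSet x).ncard := by
  rw [← Set.ncard_image_of_injective _ Subtype.val_injective]
  congr 1
  ext y
  simp [and_comm]

theorem SimpleGraph.IsBipartiteWith.ncard_eq_ncard_of_regular [Fintype V]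
    (h : G.IsBipartiteWith A B) {d : ℕ} (hreg : ∀ v, (G.neighborSet v).ncard = d) (hd : 0 < d) :
    A.ncard = B.ncard := by
  classical
  have hsum := SimpleGraph.isBipartiteWith_sum_degrees_eq (s := A.toFinset) (t := B.toFinset)
    (by simpa using h)
  have hdeg (v : V) : G.degree v = d := by
    rw [← G.card_neighborFinset_eq_degree, ← hreg v, Set.ncard_eq_toFinset_card']
    rfl
  simp only [hdeg, Finset.sum_const, smul_eq_mul] at hsum
  rw [Set.ncard_eq_toFinset_card' A, Set.ncard_eq_toFinset_card' B]
  exact Nat.eq_of_mul_eq_mul_right hd hsum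

theorem FalseTwinFree.exists_adj_not_adj [Finite V] (hftf : FalseTwinFree G) {d : ℕ}
    (hreg : ∀ v, (G.neighborSet v).ncard = d) {u v : V} (huv : u ≠ v) :
    ∃ w, G.Adj v w ∧ ¬ G.Adj u w := by
  by_contra! hsub
  exact hftf v u huv.symm <|
    Set.eq_of_subset_of_ncard_le (fun w => hsub w) (by rw [hreg, hreg]) (Set.toFinite _)

theorem exists_isLegalSeq_length_three [Finite V] (hbip : G.IsBipartiteWith A B)
    (hftf : FalseTwinFree G) {d : ℕ} (hreg : ∀ v, (G.neighborSet v).ncard = d) {b : V}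
    (hb : b ∈ B) (hb₀ : (G.neighborSet b).Nonempty) (hk : 1 < (A \ G.neighborSet b).ncard) :
    ∃ l, IsLegalSeq G l ∧ (∀ x ∈ l, x ∈ A) ∧ l.length = 3 := by
  obtain ⟨x₁, ⟨hx₁, hbx₁⟩, x₂, ⟨hx₂, hbx₂⟩, hx₁₂⟩ := (Set.one_lt_ncard_iff_nontrivial).1 hk
  obtain ⟨x₃, hbx₃⟩ := hb₀
  obtain ⟨w, hx₂w, hx₁w⟩ := hftf.exists_adj_not_adj hreg hx₁₂
  have hl := ((isLegalSeq_singleton x₁).concat hx₂w (by simpa using hx₁w)).concat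
    (G.adj_symm hbx₃) (by simpa [G.adj_comm _ b] using ⟨hbx₁, hbx₂⟩)
  refine ⟨_, hl, by simpa using ⟨hx₁, hx₂, hbip.symm.mem_of_mem_adj hb hbx₃⟩, rfl⟩

/-- `la ++ lb` is legal and extends to a total dominating sequence. -/
theorem length_add_length_le_grundyTotalDomNum [Fintype V] (hbip : G.IsBipartiteWith A B)
    (hiso : NoIsolatedVerts G) {la lb : List V} (hla : IsLegalSeq G la) (hlb : IsLegalSeq G lb)
    (hlaA : ∀ x ∈ la, x ∈ A) (hlbB : ∀ y ∈ lb, y ∈ B) :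
    la.length + lb.length ≤ grundyTotalDomNum G := by
  have hsep : ∀ x ∈ la, ∀ y ∈ lb, ∀ w, G.Adj y w → ¬ G.Adj x w := fun x hx y hy w hyw hxw =>
    Set.disjoint_left.1 hbip.disjoint (hbip.symm.mem_of_mem_adj (hlbB y hy) hyw)
      (hbip.mem_of_mem_adj (hlaA x hx) hxw)
  obtain ⟨l, hl, -, hdom, hlen⟩ := (hla.append hlb hsep fun y _ => hiso y).exists_extension
    (P := Set.univ) (T := Set.univ) (fun _ _ => trivial)
    fun v _ => (hiso v).imp fun u hu => ⟨trivial, hu⟩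
  have := IsTotalDomSeq.length_le_grundyTotalDomNum ⟨hl, fun v => hdom v trivial⟩
  simp only [List.length_append] at hlen
  omega

end Bipartite

section RegularBipartite

variable {V : Type*} [Fintype V] {G : SimpleGraph V} {A B : Set V} {n k : ℕ}

theorem ncard_sdiff_neighborSet (hbip : G.IsBipartiteWith A B) (hiso : NoIsolatedVerts G)
    (hB : B.ncard = n) (hreg : ∀ v, (G.neighborSet v).ncard = n - k) {a : V} (ha : a ∈ A) :
    (B \ G.neighborSet a).ncard = k := by
  have hpos : 0 < (G.neighborSet a).ncard := (Set.ncard_pos (Set.toFinite _)).2 (hiso a)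
  rw [hreg] at hpos
  rw [Set.ncard_sdiff (SimpleGraph.isBipartiteWith_neighborSet_subset hbip ha), hB, hreg]
  omega

theorem IsLegalSeq.length_le_three (hbip : G.IsBipartiteWith A B) (hftf : FalseTwinFree G)
    (hiso : NoIsolatedVerts G) (hA : A.ncard = n) (hreg : ∀ v, (G.neighborSet v).ncard = n - k)
    (hk : 2 ≤ k) (hgr : grundyTotalDomNum G ≤ 6) {l : List V} (hl : IsLegalSeq G l)
    (hlB : ∀ y ∈ l, y ∈ B) : l.length ≤ 3 := by
  obtain _ | ⟨b, l'⟩ := l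
  · simp
  have hb : b ∈ B := hlB b List.mem_cons_self
  obtain ⟨la, hla, hlaA, hlen⟩ := exists_isLegalSeq_length_three hbip hftf hreg hb (hiso b)
    (by rw [ncard_sdiff_neighborSet hbip.symm hiso hA hreg hb]; omega)
  have := length_add_length_le_grundyTotalDomNum hbip hiso hla hl hlaA hlB
  omega

/-- Otherwise `x`, `x'` and a legal sequence inside `B` dominating `A` would form a total
dominating set of at most five vertices. -/
theorem exists_common_not_adj (hbip : G.IsBipartiteWith A B) (hiso : NoIsolatedVerts G)
    (htd : 6 ≤ totalDomNum G)
    (hB3 : ∀ l, IsLegalSeq G l → (∀ y ∈ l, y ∈ B) → l.length ≤ 3) (x x' : V) :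
    ∃ y ∈ B, ¬ G.Adj x y ∧ ¬ G.Adj x' y := by
  obtain ⟨l, hl, hlB, hdom, -⟩ := (isLegalSeq_nil (G := G)).exists_extension (P := B) (T := A)
    (by simp) fun a ha => (hiso a).imp fun u hu => ⟨hbip.mem_of_mem_adj ha hu, hu⟩
  by_contra! hcov
  have hS : IsTotalDomSet G (insert x (insert x' {v | v ∈ l})) := by
    intro v
    obtain ⟨u, hu⟩ := hiso v
    rcases hbip.mem_of_adj hu with ⟨hv, -⟩ | ⟨hv, -⟩
    · obtain ⟨u, hu, hvu⟩ := hdom v hv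
      exact ⟨u, by simp [hu], hvu⟩
    · by_cases hxv : G.Adj x v
      · exact ⟨x, by simp, hxv.symm⟩
      · exact ⟨x', by simp, (hcov v hv hxv).symm⟩
  have hl5 : (insert x (insert x' {v | v ∈ l})).ncard ≤ 5 := by
    have : {v | v ∈ l}.ncard ≤ 3 := by
      classical
      rw [show {v | v ∈ l} = ↑l.toFinset by ext; simp, Set.ncard_coe_finset]
      exact l.toFinset_card_le.trans (hB3 l hl hlB)
    have := Set.ncard_insert_le x' {v | v ∈ l}
    have := Set.ncard_insert_le x (insert x' {v | v ∈ l})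
    omega
  have := totalDomNum_le_ncard hS
  omega

theorem eq_of_common_not_adj (hbip : G.IsBipartiteWith A B) (hftf : FalseTwinFree G)
    (hiso : NoIsolatedVerts G) {d : ℕ} (hreg : ∀ v, (G.neighborSet v).ncard = d)
    (hA3 : ∀ l, IsLegalSeq G l → (∀ x ∈ l, x ∈ A) → l.length ≤ 3)
    {x x' u v : V} (hx : x ∈ A) (hx' : x' ∈ A) (hxx' : x ≠ x')
    (hu : u ∈ B) (hxu : ¬ G.Adj x u) (hx'u : ¬ G.Adj x' u)
    (hv : v ∈ B) (hxv : ¬ G.Adj x v) (hx'v : ¬ G.Adj x' v) : u = v := by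
  -- a neighbour `z` of `u` missing `v` would give the legal sequence `x, x', z, y` inside `A`,
  -- for any neighbour `y` of `v`; so `u` and `v` are twins
  have hsub {u v : V} (hu : u ∈ B) (hxu : ¬ G.Adj x u) (hx'u : ¬ G.Adj x' u)
      (hv : v ∈ B) (hxv : ¬ G.Adj x v) (hx'v : ¬ G.Adj x' v) :
      G.neighborSet u ⊆ G.neighborSet v := by
    intro z huz
    by_contra hvz
    replace hvz : ¬ G.Adj z v := fun h => hvz h.symm
    obtain ⟨w, hx'w, hxw⟩ := hftf.exists_adj_not_adj hreg hxx'
    obtain ⟨y, hvy⟩ := hiso v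
    have hl := (((isLegalSeq_singleton x).concat hx'w (by simpa using hxw)).concat
      (G.adj_symm huz) (by simpa using ⟨hxu, hx'u⟩)).concat (G.adj_symm hvy)
      (by simpa using ⟨hxv, hx'v, hvz⟩)
    have := hA3 _ hl (by simpa using ⟨hx, hx', hbip.symm.mem_of_mem_adj hu huz,
      hbip.symm.mem_of_mem_adj hv hvy⟩)
    simp at this
  by_contra huv
  exact hftf u v huv ((hsub hu hxu hx'u hv hxv hx'v).antisymm (hsub hv hxv hx'v hu hxu hx'u))

theorem existsUnique_common_not_adj (hbip : G.IsBipartiteWith A B) (hftf : FalseTwinFree G)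
    (hiso : NoIsolatedVerts G) {d : ℕ} (hreg : ∀ v, (G.neighborSet v).ncard = d)
    (htd : 6 ≤ totalDomNum G) (hA3 : ∀ l, IsLegalSeq G l → (∀ x ∈ l, x ∈ A) → l.length ≤ 3)
    (hB3 : ∀ l, IsLegalSeq G l → (∀ y ∈ l, y ∈ B) → l.length ≤ 3)
    {x x' : V} (hx : x ∈ A) (hx' : x' ∈ A) (hxx' : x ≠ x') :
    ∃! y : B, ¬ G.Adj x y ∧ ¬ G.Adj x' y := by
  obtain ⟨y, hy, hxy, hx'y⟩ := exists_common_not_adj hbip hiso htd hB3 x x'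
  exact ⟨⟨y, hy⟩, ⟨hxy, hx'y⟩, fun y' hy' => Subtype.ext <|
    eq_of_common_not_adj hbip hftf hiso hreg hA3 hx hx' hxx' y'.2 hy'.1 hy'.2 hy hxy hx'y⟩

theorem isProjectivePlane_not_adj (hbip : G.IsBipartiteWith A B) (hftf : FalseTwinFree G)
    (hiso : NoIsolatedVerts G) (hA : A.ncard = n) (hB : B.ncard = n)
    (hreg : ∀ v, (G.neighborSet v).ncard = n - k) (hk : 2 ≤ k) (htd : 6 ≤ totalDomNum G)
    (hgr : grundyTotalDomNum G ≤ 6) :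
    IsProjectivePlane (fun (a : A) (b : B) => ¬ G.Adj a b) k := by
  have hA3 (l) := IsLegalSeq.length_le_three (l := l) hbip.symm hftf hiso hB hreg hk hgr
  have hB3 (l) := IsLegalSeq.length_le_three (l := l) hbip hftf hiso hA hreg hk hgr
  refine ⟨fun a a' h => ?_, fun b b' h => ?_, fun b => ?_, fun a => ?_⟩
  · exact existsUnique_common_not_adj hbip hftf hiso hreg htd hA3 hB3 a.2 a'.2
      (Subtype.coe_ne_coe.2 h)
  · simpa only [G.adj_comm _ (b : V), G.adj_comm _ (b' : V)] using
      existsUnique_common_not_adj hbip.symm hftf hiso hreg htd hB3 hA3 b.2 b'.2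
        (Subtype.coe_ne_coe.2 h)
  · simp only [G.adj_comm _ (b : V)]
    rw [ncard_setOf_not_adj, ncard_sdiff_neighborSet hbip.symm hiso hA hreg b.2]
  · rw [ncard_setOf_not_adj, ncard_sdiff_neighborSet hbip hiso hB hreg a.2]

end RegularBipartite

/-- For `k ≥ 2`, if an `(n−k)`-regular bipartite false twin-free
graph on `2n` vertices with `γ_t = γ_gr^t = 6` exists, then an orthogonal array
`OA(k, k − 1)` exists. -/
theorem orthogonal_array_of_regular_bipartite_six (n k : ℕ) (hk : 2 ≤ k)
    (h : ∃ (V : Type) (_ : Fintype V) (G : SimpleGraph V) (A B : Set V),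
        Fintype.card V = 2 * n ∧ IsBipartitionOf G A B ∧ FalseTwinFree G ∧
        (∀ v : V, (G.neighborSet v).ncard = n - k) ∧
        totalDomNum G = 6 ∧ grundyTotalDomNum G = 6) :
    ∃ A : Fin ((k - 1) ^ 2) → Fin k → Fin (k - 1), IsOrthogonalArray A := by
  obtain ⟨V, _, G, A, B, hcard, hbip, hftf, hreg, htd, hgr⟩ := h
  obtain ⟨S, hS, hS6⟩ := exists_isTotalDomSet_ncard_eq (G := G) (by omega)
  have hiso := hS.noIsolatedVerts
  obtain ⟨v, -⟩ := Set.nonempty_of_ncard_ne_zero (s := S) (by omega)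
  have hkn : k < n := by
    have : 0 < (G.neighborSet v).ncard := (Set.ncard_pos (Set.toFinite _)).2 (hiso v)
    rw [hreg] at this
    omega
  have hAB := hbip.isBipartiteWith.ncard_eq_ncard_of_regular hreg (by omega)
  have hsum := hbip.ncard_add_ncard
  rw [Nat.card_eq_fintype_card, hcard] at hsum
  have hplane := isProjectivePlane_not_adj hbip.isBipartiteWith hftf hiso (n := n)
    (by omega) (by omega) hreg hk htd.ge hgr.le
  obtain ⟨a, ha⟩ := Set.nonempty_of_ncard_ne_zero (s := A) (by omega)
  exact hplane.exists_isOrthogonalArray (by omega) ⟨a, ha⟩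
end

section
/- Let k ∈ ℕ with k ≥ 2 and set n = k² − k + 1. If there exists an orthogonal array OA(k, k − 1), then there exists an (n−k)-regular bipartite graph G on 2n vertices with γ_t(G) = 6 and γ_gr^t(G) = 6. -/
/-! The array gives a projective plane of order `k - 1` (for `k = 2`, a triangle): its points are
the `(k - 1)²` rows and `k` points at infinity, its lines are the line at infinity and, for each
column `j` and symbol `x`, the rows with `x` in column `j` together with the point at infinity of
`j`. Meets of lines come from the orthogonality of the columns, and joins of points then follow
from `|P| = |L| = n`. Let `G` join every point to the `n - k` lines not through it.

At most two points lie on a common line, which they do not dominate, so a total dominating set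
contains three points and, dually, three lines; the vertices and sides of a triangle are such a
set. In a legal sequence, a point that is not first must dominate a line through all earlier
points. After a third point no such line exists (the only line through the first two points
misses the third), so a legal sequence has at most three points and three lines, and the
vertices of a triangle followed by its sides form one of length six. -/

section LegalSeq
variable {V V' : Type*} {G : SimpleGraph V} {G' : SimpleGraph V'} {l l' : List V} {v : V}

theorem IsLegalSeq.sublist (hl : IsLegalSeq G l) (h : l'.Sublist l) : IsLegalSeq G l' := by
  obtain ⟨f, hf⟩ := List.sublist_iff_exists_fin_orderEmbedding_get_eq.mp h
  refine ⟨hl.1.sublist h, fun i hi => ?_⟩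
  have hfi : 0 < (f i : ℕ) :=
    (Nat.zero_le _).trans_lt (f.lt_iff_lt.mpr (show (⟨0, by omega⟩ : Fin _) < i from hi))
  obtain ⟨w, hw, hprev⟩ := hl.2 (f i) hfi
  exact ⟨w, hf i ▸ hw, fun j hj => hf j ▸ hprev (f j) (f.lt_iff_lt.mpr hj)⟩

theorem isLegalSeq_append_singleton :
    IsLegalSeq G (l ++ [v]) ↔
      IsLegalSeq G l ∧ v ∉ l ∧ (l ≠ [] → ∃ w, G.Adj v w ∧ ∀ u ∈ l, ¬ G.Adj u w) := by
  have hnodup : (l ++ [v]).Nodup ↔ l.Nodup ∧ v ∉ l := by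
    rw [← List.concat_eq_append, List.nodup_concat, and_comm]
  constructor
  · intro hl
    refine ⟨hl.sublist (List.sublist_append_left l [v]), (hnodup.mp hl.1).2, fun hne => ?_⟩
    obtain ⟨w, hw, hprev⟩ := hl.2 ⟨l.length, by simp⟩ (List.length_pos_iff.mpr hne)
    refine ⟨w, by simpa using hw, fun u hu => ?_⟩
    obtain ⟨j, hj, rfl⟩ := List.getElem_of_mem hu
    simpa [List.getElem_append_left hj] using hprev ⟨j, by simp; omega⟩ hj
  · rintro ⟨hl, hv, hfoot⟩
    refine ⟨hnodup.mpr ⟨hl.1, hv⟩, fun i hi => ?_⟩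
    obtain ⟨i, hi'⟩ := i
    simp only [List.length_append, List.length_singleton] at hi'
    rcases Nat.lt_succ_iff_lt_or_eq.mp hi' with hil | rfl
    · obtain ⟨w, hw, hprev⟩ := hl.2 ⟨i, hil⟩ hi
      refine ⟨w, by simpa [List.getElem_append_left hil] using hw, fun j hj => ?_⟩
      simpa [List.getElem_append_left (hj.trans hil)] using hprev ⟨j, hj.trans hil⟩ hj
    · obtain ⟨w, hw, hprev⟩ := hfoot (List.ne_nil_of_length_pos hi)
      refine ⟨w, by simpa using hw, fun j hj => ?_⟩
      simpa [List.getElem_append_left hj] using hprev _ (List.getElem_mem hj)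

theorem IsLegalSeq.map_iso (e : G ≃g G') (hl : IsLegalSeq G l) : IsLegalSeq G' (l.map e) := by
  refine ⟨hl.1.map e.injective, fun i hi => ?_⟩
  obtain ⟨w, hw, hprev⟩ := hl.2 (i.cast (by simp)) hi
  refine ⟨e w, by simpa [e.map_adj_iff] using hw, fun j hj => ?_⟩
  simpa [e.map_adj_iff] using hprev (j.cast (by simp)) hj

theorem IsTotalDomSet.preimage_iso (e : G ≃g G') {S : Set V'} (hS : IsTotalDomSet G' S) :
    IsTotalDomSet G (e ⁻¹' S) := fun v => by
  obtain ⟨u, hu, hadj⟩ := hS (e v)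
  exact ⟨e.symm u, by simpa using hu, by simpa [← e.map_adj_iff] using hadj⟩

end LegalSeq

open Configuration

theorem Set.ncard_eq_ncard_preimage_inl_add_ncard_preimage_inr {α β : Type*} [Finite α] [Finite β]
    (S : Set (α ⊕ β)) : S.ncard = (Sum.inl ⁻¹' S).ncard + (Sum.inr ⁻¹' S).ncard := by
  conv_lhs => rw [← Set.sumEquiv.symm_apply_apply S]
  rw [Set.sumEquiv_symm_apply, Set.ncard_union_eq Set.disjoint_image_inl_image_inr,
    Set.ncard_image_of_injective _ Sum.inl_injective,
    Set.ncard_image_of_injective _ Sum.inr_injective]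
  rfl

theorem List.exists_four_inl_sublist {α β : Type*} {l : List (α ⊕ β)}
    (h : 4 ≤ (l.filter Sum.isLeft).length) :
    ∃ a₀ a₁ a₂ a₃ : α, [.inl a₀, .inl a₁, .inl a₂, .inl a₃].Sublist l := by
  have hsub := (List.take_sublist 4 _).trans (List.filter_sublist (p := Sum.isLeft) (l := l))
  have hleft : ∀ x ∈ (l.filter Sum.isLeft).take 4, x.isLeft :=
    fun x hx => (List.mem_filter.mp (List.mem_of_mem_take hx)).2
  obtain ⟨x₀, x₁, x₂, x₃, ht⟩ :=
    List.length_eq_four.mp (show ((l.filter Sum.isLeft).take 4).length = 4 by simp; omega)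
  rw [ht] at hsub hleft
  obtain ⟨a₀, rfl⟩ := Sum.isLeft_iff.mp (hleft x₀ (by simp))
  obtain ⟨a₁, rfl⟩ := Sum.isLeft_iff.mp (hleft x₁ (by simp))
  obtain ⟨a₂, rfl⟩ := Sum.isLeft_iff.mp (hleft x₂ (by simp))
  obtain ⟨a₃, rfl⟩ := Sum.isLeft_iff.mp (hleft x₃ (by simp))
  exact ⟨a₀, a₁, a₂, a₃, hsub⟩

section Nonincidence
variable (P L : Type*) [Membership P L]

def nonincidenceGraph : SimpleGraph (P ⊕ L) where
  Adj
    | .inl p, .inr l => p ∉ l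
    | .inr l, .inl p => p ∉ l
    | _, _ => False
  symm := ⟨by rintro (p | l) (p' | l') h <;> exact h⟩
  loopless := ⟨by rintro (p | l) h <;> exact h⟩

variable {P L}

@[simp] theorem nonincidenceGraph_adj_inl_inr {p : P} {l : L} :
    (nonincidenceGraph P L).Adj (.inl p) (.inr l) ↔ p ∉ l := Iff.rfl
@[simp] theorem nonincidenceGraph_adj_inr_inl {p : P} {l : L} :
    (nonincidenceGraph P L).Adj (.inr l) (.inl p) ↔ p ∉ l := Iff.rfl
@[simp] theorem not_nonincidenceGraph_adj_inl_inl {p p' : P} :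
    ¬ (nonincidenceGraph P L).Adj (.inl p) (.inl p') := id
@[simp] theorem not_nonincidenceGraph_adj_inr_inr {l l' : L} :
    ¬ (nonincidenceGraph P L).Adj (.inr l) (.inr l') := id

variable (P L)

theorem isBipartitionOf_nonincidenceGraph :
    IsBipartitionOf (nonincidenceGraph P L) (Set.range Sum.inl) (Set.range Sum.inr) := by
  refine ⟨by rintro (p | l) <;> simp, ?_⟩
  rintro (p | l) (p' | l') h <;> simp_all

def nonincidenceGraphDualIso : nonincidenceGraph (Dual L) (Dual P) ≃g nonincidenceGraph P L where
  toEquiv := Equiv.sumComm (Dual L) (Dual P)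
  map_rel_iff' := by rintro (l | p) (l' | p') <;> rfl

variable {P L}

theorem ncard_neighborSet_inl [Finite L] (p : P) :
    ((nonincidenceGraph P L).neighborSet (.inl p)).ncard = Nat.card L - lineCount L p := by
  have : (nonincidenceGraph P L).neighborSet (.inl p) = Sum.inr '' {l | p ∈ l}ᶜ := by
    ext (p' | l) <;> simp
  rw [this, Set.ncard_image_of_injective _ Sum.inr_injective, Set.ncard_compl]
  rfl

theorem ncard_neighborSet_inr [Finite P] (l : L) :
    ((nonincidenceGraph P L).neighborSet (.inr l)).ncard = Nat.card P - pointCount P l := by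
  have : (nonincidenceGraph P L).neighborSet (.inr l) = Sum.inl '' {p | p ∈ l}ᶜ := by
    ext (p | l') <;> simp
  rw [this, Set.ncard_image_of_injective _ Sum.inl_injective, Set.ncard_compl]
  rfl

theorem not_isLegalSeq_four_inl [Nondegenerate P L] (p₀ p₁ p₂ p₃ : P) :
    ¬ IsLegalSeq (nonincidenceGraph P L) [.inl p₀, .inl p₁, .inl p₂, .inl p₃] := by
  intro hl
  -- the footprints of `p₂` and `p₃` are lines through `p₀` and `p₁`, and only the second passes
  -- through `p₂`
  obtain ⟨h₃, -, hfoot₃⟩ := (isLegalSeq_append_singleton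
    (l := [Sum.inl p₀, Sum.inl p₁, Sum.inl p₂]) (v := Sum.inl p₃)).mp hl
  obtain ⟨h₂, -, hfoot₂⟩ :=
    (isLegalSeq_append_singleton (l := [Sum.inl p₀, Sum.inl p₁]) (v := Sum.inl p₂)).mp h₃
  obtain ⟨_ | m₃, hm₃, hm₃'⟩ := hfoot₃ (by simp) <;> simp at hm₃
  obtain ⟨_ | m₂, hm₂, hm₂'⟩ := hfoot₂ (by simp) <;> simp at hm₂
  simp only [List.mem_cons, List.not_mem_nil, or_false, forall_eq_or_imp, forall_eq,
    nonincidenceGraph_adj_inl_inr, not_not] at hm₃' hm₂'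
  have hp : p₀ ≠ p₁ := by simpa using h₂.1
  obtain h | rfl := Nondegenerate.eq_or_eq hm₂'.1 hm₂'.2 hm₃'.1 hm₃'.2.1
  · exact hp h
  · exact hm₂ hm₃'.2.2

theorem IsLegalSeq.length_filter_isLeft_le_three [Nondegenerate P L] {l : List (P ⊕ L)}
    (hl : IsLegalSeq (nonincidenceGraph P L) l) : (l.filter Sum.isLeft).length ≤ 3 := by
  by_contra! h
  obtain ⟨p₀, p₁, p₂, p₃, hsub⟩ := List.exists_four_inl_sublist h
  exact not_isLegalSeq_four_inl p₀ p₁ p₂ p₃ (hl.sublist hsub)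

theorem IsLegalSeq.length_filter_isRight_le_three [Nondegenerate P L] {l : List (P ⊕ L)}
    (hl : IsLegalSeq (nonincidenceGraph P L) l) : (l.filter Sum.isRight).length ≤ 3 := by
  have := (hl.map_iso (nonincidenceGraphDualIso P L).symm).length_filter_isLeft_le_three
  have hswap (x : P ⊕ L) : ((nonincidenceGraphDualIso P L).symm x).isLeft = x.isRight := by
    cases x <;> rfl
  simpa [List.filter_map, Function.comp_def, hswap] using this

theorem IsLegalSeq.length_le_six [Nondegenerate P L] {l : List (P ⊕ L)}
    (hl : IsLegalSeq (nonincidenceGraph P L) l) : l.length ≤ 6 := by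
  rw [List.length_eq_length_filter_add Sum.isLeft]
  simp only [Sum.bnot_isLeft]
  linarith [hl.length_filter_isLeft_le_three, hl.length_filter_isRight_le_three]

end Nonincidence

section Triangle
variable {P L : Type*} [Membership P L] {v : Fin 3 → P} {e : Fin 3 → L}

/-- `e i` is the side opposite to the vertex `v i`. -/
def IsTriangle (v : Fin 3 → P) (e : Fin 3 → L) : Prop :=
  ∀ i j, v i ∈ e j ↔ i ≠ j

theorem IsTriangle.mem_iff (hT : IsTriangle v e) {i j : Fin 3} : v i ∈ e j ↔ i ≠ j :=
  hT i j

theorem IsTriangle.dual (hT : IsTriangle v e) : IsTriangle (P := Dual L) (L := Dual P) e v :=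
  fun i j => (hT j i).trans ne_comm

theorem IsTriangle.injective (hT : IsTriangle v e) : Function.Injective v := by
  intro i j hij
  by_contra hne
  exact ((hT j j).mp (hij ▸ (hT i j).mpr hne)) rfl

theorem IsTriangle.injective_sides (hT : IsTriangle v e) : Function.Injective e :=
  hT.dual.injective

theorem IsTriangle.exists_not_mem [Nondegenerate P L] (hT : IsTriangle v e) (l : L) :
    ∃ i, v i ∉ l := by
  by_contra! h
  obtain h01 | rfl := Nondegenerate.eq_or_eq (h 0) (h 1)
    ((hT 0 2).mpr (by decide)) ((hT 1 2).mpr (by decide))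
  · exact absurd (hT.injective h01) (by decide)
  · exact (hT 2 2).mp (h 2) rfl

theorem IsTriangle.exists_forall_mem_of_ncard_le_two [HasLines P L] (hT : IsTriangle v e)
    {T : Set P} (hfin : T.Finite) (hcard : T.ncard ≤ 2) : ∃ l : L, ∀ p ∈ T, p ∈ l := by
  interval_cases h : T.ncard
  · exact ⟨e 0, by simp [(Set.ncard_eq_zero hfin).mp h]⟩
  · obtain ⟨p, rfl⟩ := Set.ncard_eq_one.mp h
    by_cases hp : p = v 0
    · exact ⟨e 1, by simpa [hp] using (hT 0 1).mpr (by decide)⟩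
    · exact ⟨HasLines.mkLine hp, by simpa using (HasLines.mkLine_ax hp).1⟩
  · obtain ⟨p, q, hpq, rfl⟩ := Set.ncard_eq_two.mp h
    exact ⟨HasLines.mkLine hpq, by simpa using HasLines.mkLine_ax hpq⟩

variable (v e) in
def triangleSeq : List (P ⊕ L) :=
  [.inl (v 0), .inl (v 1), .inl (v 2), .inr (e 0), .inr (e 1), .inr (e 2)]

theorem IsTriangle.nodup_triangleSeq (hT : IsTriangle v e) : (triangleSeq v e).Nodup := by
  simp [triangleSeq, hT.injective.eq_iff, hT.injective_sides.eq_iff]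

theorem IsTriangle.isLegalSeq (hT : IsTriangle v e) :
    IsLegalSeq (nonincidenceGraph P L) (triangleSeq v e) := by
  -- the footprint of a vertex is its opposite side and that of a side its opposite vertex
  refine ⟨hT.nodup_triangleSeq, fun i hi =>
    ⟨(triangleSeq v e).get ⟨(i + 3) % 6, by simp [triangleSeq]; omega⟩, ?_, fun j hj => ?_⟩⟩
  · fin_cases i <;> simp [triangleSeq, hT.mem_iff] at hi ⊢
  · fin_cases i <;> fin_cases j <;> simp [triangleSeq, hT.mem_iff] at hi hj ⊢

theorem IsTriangle.isTotalDomSet [Nondegenerate P L] (hT : IsTriangle v e) :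
    IsTotalDomSet (nonincidenceGraph P L) {x | x ∈ triangleSeq v e} := by
  rintro (p | l)
  · obtain ⟨i, hi⟩ := hT.dual.exists_not_mem p
    exact ⟨.inr (e i), by fin_cases i <;> simp [triangleSeq], hi⟩
  · obtain ⟨i, hi⟩ := hT.exists_not_mem l
    exact ⟨.inl (v i), by fin_cases i <;> simp [triangleSeq], hi⟩

theorem IsTotalDomSet.three_le_ncard_preimage_inl [HasLines P L] [Finite P]
    (hT : IsTriangle v e) {S : Set (P ⊕ L)} (hS : IsTotalDomSet (nonincidenceGraph P L) S) :
    3 ≤ (Sum.inl ⁻¹' S).ncard := by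
  by_contra! h
  obtain ⟨l, hl⟩ := hT.exists_forall_mem_of_ncard_le_two (T := Sum.inl ⁻¹' S) (Set.toFinite _) (by omega)
  obtain ⟨_ | _, hu, hadj⟩ := hS (.inr l)
  · exact hadj (hl _ hu)
  · exact hadj

theorem IsTotalDomSet.three_le_ncard_preimage_inr [HasPoints P L] [Finite L]
    (hT : IsTriangle v e) {S : Set (P ⊕ L)} (hS : IsTotalDomSet (nonincidenceGraph P L) S) :
    3 ≤ (Sum.inr ⁻¹' S).ncard :=
  (hS.preimage_iso (nonincidenceGraphDualIso P L)).three_le_ncard_preimage_inl hT.dual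

theorem IsTriangle.totalDomNum_nonincidenceGraph [HasPoints P L] [HasLines P L] [Finite P]
    [Finite L] (hT : IsTriangle v e) : totalDomNum (nonincidenceGraph P L) = 6 := by
  classical
  refine IsLeast.csInf_eq ⟨⟨_, hT.isTotalDomSet, ?_⟩, ?_⟩
  · rw [← List.coe_toFinset, Set.ncard_coe_finset, List.toFinset_card_of_nodup hT.nodup_triangleSeq]
    rfl
  · rintro _ ⟨S, hS, rfl⟩
    rw [S.ncard_eq_ncard_preimage_inl_add_ncard_preimage_inr]
    linarith [hS.three_le_ncard_preimage_inl hT, hS.three_le_ncard_preimage_inr hT]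

theorem IsTriangle.grundyTotalDomNum_nonincidenceGraph [Nondegenerate P L]
    (hT : IsTriangle v e) : grundyTotalDomNum (nonincidenceGraph P L) = 6 :=
  IsGreatest.csSup_eq ⟨⟨_, ⟨hT.isLegalSeq, hT.isTotalDomSet⟩, rfl⟩,
    by rintro _ ⟨l, hl, rfl⟩; exact hl.1.length_le_six⟩

end Triangle

section OrthogonalArray
variable {s q : ℕ} (A : Fin (q ^ 2) → Fin s → Fin q)

/-- The lines of the projective plane extending the affine plane of `A`. Its points are the rows
`Sum.inl r` and the points at infinity `Sum.inr j`; `affine j x` consists of the rows with symbol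
`x` in column `j` together with `Sum.inr j`. -/
inductive OALine (A : Fin (q ^ 2) → Fin s → Fin q)
  | affine (j : Fin s) (x : Fin q)
  | infinity

def OALine.equivOption : OALine A ≃ Option (Fin s × Fin q) where
  toFun
    | .affine j x => some (j, x)
    | .infinity => none
  invFun
    | some (j, x) => .affine j x
    | none => .infinity
  left_inv := by rintro (_ | _) <;> rfl
  right_inv := by rintro (_ | _) <;> rfl

instance : Fintype (OALine A) := Fintype.ofEquiv _ (OALine.equivOption A).symm

instance : Membership (Fin (q ^ 2) ⊕ Fin s) (OALine A) where
  mem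
    | .affine j x, .inl r => A r j = x
    | .affine j _, .inr i => i = j
    | .infinity, .inl _ => False
    | .infinity, .inr _ => True

variable {A}

@[simp] theorem OALine.inl_mem_affine {r : Fin (q ^ 2)} {j : Fin s} {x : Fin q} :
    Sum.inl r ∈ OALine.affine (A := A) j x ↔ A r j = x := Iff.rfl
@[simp] theorem OALine.inr_mem_affine {i j : Fin s} {x : Fin q} :
    Sum.inr i ∈ OALine.affine (A := A) j x ↔ i = j := Iff.rfl
@[simp] theorem OALine.inl_not_mem_infinity {r : Fin (q ^ 2)} :
    Sum.inl r ∉ (OALine.infinity : OALine A) := id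
@[simp] theorem OALine.inr_mem_infinity {i : Fin s} :
    Sum.inr i ∈ (OALine.infinity : OALine A) := trivial

theorem IsOrthogonalArray.eq_of_apply_eq (hA : IsOrthogonalArray A) {r r' : Fin (q ^ 2)}
    {j₁ j₂ : Fin s} (hj : j₁ ≠ j₂) (h₁ : A r j₁ = A r' j₁) (h₂ : A r j₂ = A r' j₂) : r = r' :=
  (hA j₁ j₂ hj _ _).unique ⟨rfl, rfl⟩ ⟨h₁.symm, h₂.symm⟩

theorem IsOrthogonalArray.nondegenerate (hA : IsOrthogonalArray A) (hs : 2 ≤ s) (hq : 0 < q) :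
    Nondegenerate (Fin (q ^ 2) ⊕ Fin s) (OALine A) where
  exists_point := by
    rintro (⟨j, x⟩ | _)
    · obtain ⟨j', hj'⟩ := Fintype.exists_ne_of_one_lt_card (by simp; omega) j
      exact ⟨.inr j', by simpa using hj'⟩
    · exact ⟨.inl ⟨0, pow_pos hq 2⟩, OALine.inl_not_mem_infinity⟩
  exists_line := by
    rintro (r | i)
    · exact ⟨.infinity, OALine.inl_not_mem_infinity⟩
    · obtain ⟨j, hj⟩ := Fintype.exists_ne_of_one_lt_card (by simp; omega) i
      exact ⟨.affine j ⟨0, hq⟩, by simpa using hj.symm⟩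
  eq_or_eq := by
    rintro (r₁ | i₁) (r₂ | i₂) (⟨j₁, x₁⟩ | _) (⟨j₂, x₂⟩ | _) h₁ h₂ h₃ h₄ <;>
      try simp_all
    -- left: two rows on two affine lines
    by_cases hj : j₁ = j₂
    · exact .inr ⟨hj, by rw [← h₁, ← h₃, hj]⟩
    · exact .inl (hA.eq_of_apply_eq hj (h₁.trans h₂.symm) (h₃.trans h₄.symm))

theorem IsOrthogonalArray.exists_mem_mem (hA : IsOrthogonalArray A) {l₁ l₂ : OALine A}
    (hl : l₁ ≠ l₂) : ∃ p, p ∈ l₁ ∧ p ∈ l₂ := by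
  rcases l₁ with ⟨j₁, x₁⟩ | _ <;> rcases l₂ with ⟨j₂, x₂⟩ | _
  · by_cases hj : j₁ = j₂
    · exact ⟨.inr j₁, by simpa using hj⟩
    · obtain ⟨r, hr, -⟩ := hA j₁ j₂ hj x₁ x₂
      exact ⟨.inl r, hr⟩
  · exact ⟨.inr j₁, by simp⟩
  · exact ⟨.inr j₂, by simp⟩
  · exact absurd rfl hl

@[reducible] noncomputable def IsOrthogonalArray.hasPoints (hA : IsOrthogonalArray A) (hs : 2 ≤ s)
    (hq : 0 < q) : HasPoints (Fin (q ^ 2) ⊕ Fin s) (OALine A) where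
  toNondegenerate := hA.nondegenerate hs hq
  mkPoint hl := (hA.exists_mem_mem hl).choose
  mkPoint_ax hl := (hA.exists_mem_mem hl).choose_spec

variable (A) in
theorem OALine.card : Fintype.card (OALine A) = s * q + 1 := by
  simp [Fintype.card_congr (OALine.equivOption A)]

theorem OALine.lineCount_inl (r : Fin (q ^ 2)) : lineCount (OALine A) (.inl r) = s := by
  have : {l : OALine A | .inl r ∈ l} = Set.range fun j => .affine j (A r j) := by
    ext (⟨j, x⟩ | _) <;> simp [eq_comm]
  change Nat.card {l : OALine A | .inl r ∈ l} = s
  rw [this, Nat.card_range_of_injective (fun j j' h => by cases h; rfl), Nat.card_fin]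

theorem OALine.lineCount_inr (i : Fin s) : lineCount (OALine A) (.inr i) = q + 1 := by
  have : {l : OALine A | .inr i ∈ l} = insert .infinity (Set.range fun x => .affine i x) := by
    ext (⟨j, x⟩ | _) <;> simp [eq_comm]
  change Nat.card {l : OALine A | .inr i ∈ l} = q + 1
  rw [this, Nat.card_coe_set_eq, Set.ncard_insert_of_notMem (by simp),
    Set.ncard_range_of_injective (fun x x' h => by cases h; rfl), Nat.card_fin]

theorem OALine.pointCount_infinity :
    pointCount (Fin (q ^ 2) ⊕ Fin s) (OALine.infinity : OALine A) = s := by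
  have : {p | p ∈ (OALine.infinity : OALine A)} = Set.range Sum.inr := by
    ext (r | i) <;> simp
  change Nat.card {p | p ∈ (OALine.infinity : OALine A)} = s
  rw [this, Nat.card_range_of_injective Sum.inr_injective, Nat.card_fin]

theorem IsOrthogonalArray.pointCount_affine (hA : IsOrthogonalArray A) (hsq : s = q + 1)
    (j : Fin s) (x : Fin q) : pointCount (Fin (q ^ 2) ⊕ Fin s) (OALine.affine (A := A) j x) = s := by
  have hq : 0 < q := x.pos
  let _ := hA.hasPoints (by omega) hq
  obtain ⟨j', hj'⟩ := Fintype.exists_ne_of_one_lt_card (by simp; omega) j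
  rw [← HasPoints.lineCount_eq_pointCount (by simp [OALine.card, hsq]; ring)
    (show Sum.inr j' ∉ OALine.affine (A := A) j x by simpa using hj'), OALine.lineCount_inr, hsq]

theorem OALine.lineCount_eq (hsq : s = q + 1) (p : Fin (q ^ 2) ⊕ Fin s) :
    lineCount (OALine A) p = s := by
  rcases p with r | i
  · exact OALine.lineCount_inl r
  · rw [OALine.lineCount_inr, hsq]

theorem IsOrthogonalArray.pointCount_eq (hA : IsOrthogonalArray A) (hsq : s = q + 1)
    (l : OALine A) : pointCount (Fin (q ^ 2) ⊕ Fin s) l = s := by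
  rcases l with ⟨j, x⟩ | _
  · exact hA.pointCount_affine hsq j x
  · exact OALine.pointCount_infinity

variable (A) in
theorem OALine.exists_isTriangle (hs : 2 ≤ s) (hq : 0 < q) :
    ∃ (v : Fin 3 → Fin (q ^ 2) ⊕ Fin s) (e : Fin 3 → OALine A), IsTriangle v e := by
  let j₀ : Fin s := ⟨0, by omega⟩
  let j₁ : Fin s := ⟨1, by omega⟩
  let r : Fin (q ^ 2) := ⟨0, pow_pos hq 2⟩
  refine ⟨![.inr j₀, .inr j₁, .inl r], ![.affine j₁ (A r j₁), .affine j₀ (A r j₀), .infinity], ?_⟩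
  intro i i'
  fin_cases i <;> fin_cases i' <;> simp [j₀, j₁, Fin.ext_iff]

end OrthogonalArray

/-- For `k ≥ 2` and `n = k² − k + 1`, if an orthogonal array
`OA(k, k − 1)` exists, then there exists an `(n−k)`-regular bipartite graph on
`2n` vertices with `γ_t = γ_gr^t = 6`. -/
theorem regular_bipartite_six_of_orthogonal_array (k : ℕ) (hk : 2 ≤ k)
    (n : ℕ) (hn : n = k ^ 2 - k + 1)
    (h : ∃ A : Fin ((k - 1) ^ 2) → Fin k → Fin (k - 1), IsOrthogonalArray A) :
    ∃ (V : Type) (_ : Fintype V) (G : SimpleGraph V) (A B : Set V),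
      Fintype.card V = 2 * n ∧ IsBipartitionOf G A B ∧
      (∀ v : V, (G.neighborSet v).ncard = n - k) ∧
      totalDomNum G = 6 ∧ grundyTotalDomNum G = 6 := by
  obtain ⟨A, hA⟩ := h
  have hsq : k = k - 1 + 1 := by omega
  obtain ⟨hP, hL⟩ :
      Fintype.card (Fin ((k - 1) ^ 2) ⊕ Fin k) = n ∧ Fintype.card (OALine A) = n := by
    rw [Fintype.card_sum, Fintype.card_fin, Fintype.card_fin, OALine.card]
    obtain ⟨q, rfl⟩ : ∃ q, k = q + 1 := ⟨k - 1, hsq⟩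
    have h₁ : (q + 1) ^ 2 = q ^ 2 + q + (q + 1) := by ring
    have h₂ : (q + 1) * q = q ^ 2 + q := by ring
    simp only [Nat.add_sub_cancel]
    omega
  let _ := hA.hasPoints hk (by omega)
  let _ := HasPoints.hasLines (hP.trans hL.symm)
  obtain ⟨v, e, hT⟩ := OALine.exists_isTriangle A hk (by omega)
  refine ⟨_, inferInstance, nonincidenceGraph _ (OALine A), _, _, ?_,
    isBipartitionOf_nonincidenceGraph _ _, ?_, hT.totalDomNum_nonincidenceGraph,
    hT.grundyTotalDomNum_nonincidenceGraph⟩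
  · rw [Fintype.card_sum, hP, hL, two_mul]
  · rintro (p | l)
    · rw [ncard_neighborSet_inl, Nat.card_eq_fintype_card, hL, OALine.lineCount_eq hsq]
    · rw [ncard_neighborSet_inr, Nat.card_eq_fintype_card, hP, hA.pointCount_eq hsq]
end
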